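/- Weak Pareto-ranking at an optimum: Suppose (σ, μ) is a solution to the sender's problem (P) (i.e., (σ, μ) is obedient and U_s(σ, μ, τ*) attains the supremum of U_s over all obedient ambiguous experiments) and φ_r is strictly concave. Then for all θ, θ' in the support of μ such that u_s(σ_θ, τ*) ≥ U_s(σ, μ, τ*) ≥ u_s(σ_{θ'}, τ*) with at least one of these inequalities strict, the experiments σ_θ and σ_{θ'} are weakly Pareto-ranked. -/

import Mathlib

open Finset

/-- A stochastic kernel from `X` to `Y`: each row `k x` is a probability vector on `Y`.
An experiment is a kernel from states `Ω` to messages; a receiver strategy is a kernel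
from messages to actions `A`. -/
def IsKernel {X Y : Type*} [Fintype Y] (k : X → Y → ℝ) : Prop :=
  (∀ x y, 0 ≤ k x y) ∧ ∀ x, ∑ y, k x y = 1

/-- A probability vector on a finite type. -/
def IsProb {Θ : Type*} [Fintype Θ] (μ : Θ → ℝ) : Prop :=
  (∀ θ, 0 ≤ μ θ) ∧ ∑ θ, μ θ = 1

/-- The obedient strategy `τ*`: take the recommended action with probability one. -/
noncomputable def tauStar {A : Type*} [DecidableEq A] : A → A → ℝ :=
  fun m a => if a = m then (1 : ℝ) else 0

/-- Expected payoff `u_i(σ, τ) = ∑_{ω,m,a} p(ω) σ(m|ω) τ(a|m) u_i(a,ω)`. -/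
noncomputable def expPayoff {Ω M A : Type*} [Fintype Ω] [Fintype M] [Fintype A]
    (p : Ω → ℝ) (u : A → Ω → ℝ) (σ : Ω → M → ℝ) (τ : M → A → ℝ) : ℝ :=
  ∑ ω, ∑ m, ∑ a, p ω * σ ω m * τ m a * u a ω

/-- Obedience of a single (unambiguous) canonical experiment: `τ*` is a best reply. -/
def Obedient {Ω A : Type*} [Fintype Ω] [Fintype A] [DecidableEq A]
    (p : Ω → ℝ) (ur : A → Ω → ℝ) (σ : Ω → A → ℝ) : Prop :=
  ∀ τ : A → A → ℝ, IsKernel τ → expPayoff p ur σ τ ≤ expPayoff p ur σ tauStar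

/-- Obedience of an ambiguous experiment `(σ, μ)` for a smooth-ambiguity receiver with
index `φr`:  `τ*` maximizes `τ ↦ U_r(σ, μ, τ) = φr⁻¹(∑_θ μ_θ φr(u_r(σ_θ, τ)))`; since `φr`
is strictly increasing this is equivalent to `τ*` maximizing `τ ↦ ∑_θ μ_θ φr(u_r(σ_θ, τ))`. -/
def AmbObedient {Ω A Θ : Type*} [Fintype Ω] [Fintype A] [DecidableEq A] [Fintype Θ]
    (φr : ℝ → ℝ) (p : Ω → ℝ) (ur : A → Ω → ℝ) (σ : Θ → Ω → A → ℝ) (μ : Θ → ℝ) : Prop :=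
  ∀ τ : A → A → ℝ, IsKernel τ →
    ∑ θ, μ θ * φr (expPayoff p ur (σ θ) τ) ≤ ∑ θ, μ θ * φr (expPayoff p ur (σ θ) tauStar)

/-- A smooth ambiguity index: strictly increasing, concave, differentiable. -/
def SmoothIndex (φ : ℝ → ℝ) : Prop :=
  StrictMono φ ∧ ConcaveOn ℝ Set.univ φ ∧ Differentiable ℝ φ

/-- Two experiments are (strictly) Pareto ranked: under obedience, sender and receiver
strictly rank them the same way. -/
def ParetoRanked {Ω A : Type*} [Fintype Ω] [Fintype A] [DecidableEq A]
    (p : Ω → ℝ) (us ur : A → Ω → ℝ) (σ σ' : Ω → A → ℝ) : Prop :=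
  (expPayoff p us σ' tauStar < expPayoff p us σ tauStar ∧
      expPayoff p ur σ' tauStar < expPayoff p ur σ tauStar) ∨
  (expPayoff p us σ tauStar < expPayoff p us σ' tauStar ∧
      expPayoff p ur σ tauStar < expPayoff p ur σ' tauStar)

/-- Two experiments are weakly Pareto ranked. -/
def WeaklyParetoRanked {Ω A : Type*} [Fintype Ω] [Fintype A] [DecidableEq A]
    (p : Ω → ℝ) (us ur : A → Ω → ℝ) (σ σ' : Ω → A → ℝ) : Prop :=
  (expPayoff p us σ' tauStar ≤ expPayoff p us σ tauStar ∧
      expPayoff p ur σ' tauStar ≤ expPayoff p ur σ tauStar) ∨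
  (expPayoff p us σ tauStar ≤ expPayoff p us σ' tauStar ∧
      expPayoff p ur σ tauStar ≤ expPayoff p ur σ' tauStar)

/-- Pointwise convex combination of two experiments. -/
noncomputable def mixExp {Ω A : Type*} (lam : ℝ) (σ1 σ2 : Ω → A → ℝ) : Ω → A → ℝ :=
  fun ω a => lam * σ1 ω a + (1 - lam) * σ2 ω a

/-- `(σbar, σlo, lam)` is a Pareto-ranked splitting of the experiment `σ`. -/
def ParetoRankedSplitting {Ω A : Type*} [Fintype Ω] [Fintype A] [DecidableEq A]
    (p : Ω → ℝ) (us ur : A → Ω → ℝ) (σbar σlo : Ω → A → ℝ) (lam : ℝ) (σ : Ω → A → ℝ) : Prop :=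
  IsKernel σbar ∧ IsKernel σlo ∧ lam ∈ Set.Ioo (0 : ℝ) 1 ∧
    mixExp lam σbar σlo = σ ∧ ParetoRanked p us ur σbar σlo

/-- The `((σbar, σlo), lam)`-probability premium of a player with utility `u` and index `φ`. -/
noncomputable def probPremium {Ω A : Type*} [Fintype Ω] [Fintype A] [DecidableEq A]
    (p : Ω → ℝ) (u : A → Ω → ℝ) (φ : ℝ → ℝ) (σbar σlo : Ω → A → ℝ) (lam : ℝ) : ℝ :=
  (φ (expPayoff p u (mixExp lam σbar σlo) tauStar) -
      lam * φ (expPayoff p u σbar tauStar) - (1 - lam) * φ (expPayoff p u σlo tauStar)) /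
    (φ (expPayoff p u σbar tauStar) - φ (expPayoff p u σlo tauStar))

/-- The set of `φs`-transformed sender values attainable by obedient ambiguous experiments;
the value of the sender's problem `(P)` equals `u` iff `φs u` is the least upper bound of
this set (since `φs` is continuous and strictly increasing). -/
def senderValues {Ω A : Type*} [Fintype Ω] [Fintype A] [DecidableEq A]
    (φs φr : ℝ → ℝ) (p : Ω → ℝ) (us ur : A → Ω → ℝ) : Set ℝ :=
  {x | ∃ (n : ℕ) (σ : Fin n → Ω → A → ℝ) (μ : Fin n → ℝ),
    (∀ j, IsKernel (σ j)) ∧ IsProb μ ∧ AmbObedient φr p ur σ μ ∧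
    x = ∑ j, μ j * φs (expPayoff p us (σ j) tauStar)}

/-- The set of feasible values of the auxiliary program `(Φ*(u))`: sums
`∑_θ λ_θ Φ_u(σ_θ)` over splittings `(λ_θ, σ_θ)` of obedient experiments, where
`Φ_u(σ) = (φs(u_s(σ,τ*)) − φs(u)) / φr'(u_r(σ,τ*))`. -/
def phiProgram {Ω A : Type*} [Fintype Ω] [Fintype A] [DecidableEq A]
    (φs φr : ℝ → ℝ) (p : Ω → ℝ) (us ur : A → Ω → ℝ) (u : ℝ) : Set ℝ :=
  {x | ∃ (n : ℕ) (σ : Fin n → Ω → A → ℝ) (lam : Fin n → ℝ),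
    (∀ j, IsKernel (σ j)) ∧ IsProb lam ∧
    Obedient p ur (fun ω a => ∑ j, lam j * σ j ω a) ∧
    x = ∑ j, lam j * ((φs (expPayoff p us (σ j) tauStar) - φs u) /
      deriv φr (expPayoff p ur (σ j) tauStar))}

/-!
Suppose `θ` is sender-better than `θ'` but the receiver strictly prefers `σ θ'`. Replace the pair
by the single mixture `t • σ θ + (1 - t) • σ θ'`, with `t` and its weight `α` chosen so that the
receiver's marginal-utility-weighted experiment `∑_θ μ_θ φr'(u_r(σ_θ, τ*)) σ_θ` is unchanged;
since obedience is a first-order condition on exactly this object, the merged family stays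
obedient. Strict concavity of `φr` makes the marginal utility at the mixture lie strictly between
those at `σ θ` and `σ θ'`, so the merge moves weight from `σ θ'` towards `σ θ`, and concavity of
`φs` turns this into a strict gain for the sender, contradicting optimality.
-/

theorem ConcaveOn.le_add_deriv_mul_sub {φ : ℝ → ℝ} (hc : ConcaveOn ℝ Set.univ φ) {x : ℝ}
    (hd : DifferentiableAt ℝ φ x) (y : ℝ) : φ y ≤ φ x + deriv φ x * (y - x) := by
  rcases lt_trichotomy x y with hxy | rfl | hxy
  · have h := hc.slope_le_deriv (Set.mem_univ x) (Set.mem_univ y) hxy hd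
    rw [slope_def_field, div_le_iff₀ (sub_pos.2 hxy)] at h
    linarith
  · simp
  · have h := hc.deriv_le_slope (Set.mem_univ y) (Set.mem_univ x) hxy hd
    rw [slope_def_field, le_div_iff₀ (sub_pos.2 hxy)] at h
    linarith

theorem ConcaveOn.deriv_pos_of_strictMono {φ : ℝ → ℝ} (hc : ConcaveOn ℝ Set.univ φ)
    (hm : StrictMono φ) {x : ℝ} (hd : DifferentiableAt ℝ φ x) : 0 < deriv φ x := by
  have h := hc.slope_le_deriv (Set.mem_univ x) (Set.mem_univ (x + 1)) (lt_add_one x) hd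
  rw [slope_def_field, add_sub_cancel_left, div_one] at h
  linarith [hm (lt_add_one x)]

theorem HasDerivAt.nonpos_of_isMaxOn_Icc {g : ℝ → ℝ} {g' : ℝ} (hg : HasDerivAt g g' 0)
    (hmax : IsMaxOn g (Set.Icc 0 1) 0) : g' ≤ 0 := by
  have hcone : (1 : ℝ) ∈ posTangentConeAt (Set.Icc (0 : ℝ) 1) 0 :=
    mem_posTangentConeAt_of_segment_subset (by simp [segment_eq_Icc])
  simpa using hmax.localize.hasFDerivWithinAt_nonpos hg.hasDerivWithinAt.hasFDerivWithinAt hcone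

@[simp]
theorem mixExp_zero {X Y : Type*} (k₁ k₂ : X → Y → ℝ) : mixExp 0 k₁ k₂ = k₂ := by
  ext
  simp [mixExp]

theorem isKernel_mixExp {X Y : Type*} [Fintype Y] {k₁ k₂ : X → Y → ℝ} (h₁ : IsKernel k₁)
    (h₂ : IsKernel k₂) {t : ℝ} (ht : t ∈ Set.Icc (0 : ℝ) 1) : IsKernel (mixExp t k₁ k₂) := by
  refine ⟨fun x y => ?_, fun x => ?_⟩
  · exact add_nonneg (mul_nonneg ht.1 (h₁.1 x y)) (mul_nonneg (sub_nonneg.2 ht.2) (h₂.1 x y))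
  · simp only [mixExp, sum_add_distrib, ← mul_sum, h₁.2 x, h₂.2 x]
    ring

theorem isKernel_tauStar {A : Type*} [Fintype A] [DecidableEq A] : IsKernel (tauStar (A := A)) :=
  ⟨fun _ _ => by unfold tauStar; split <;> norm_num, fun _ => by simp [tauStar]⟩

section Payoff

variable {Ω M A : Type*} [Fintype Ω] [Fintype M] [Fintype A] (p : Ω → ℝ) (u : A → Ω → ℝ)

theorem expPayoff_mixExp_left (t : ℝ) (σ₁ σ₂ : Ω → M → ℝ) (τ : M → A → ℝ) :
    expPayoff p u (mixExp t σ₁ σ₂) τ = t * expPayoff p u σ₁ τ + (1 - t) * expPayoff p u σ₂ τ := by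
  simp only [expPayoff, mixExp, mul_sum, ← sum_add_distrib]
  exact sum_congr rfl fun _ _ => sum_congr rfl fun _ _ => sum_congr rfl fun _ _ => by ring

theorem expPayoff_mixExp_right (σ : Ω → M → ℝ) (t : ℝ) (τ₁ τ₂ : M → A → ℝ) :
    expPayoff p u σ (mixExp t τ₁ τ₂) = t * expPayoff p u σ τ₁ + (1 - t) * expPayoff p u σ τ₂ := by
  simp only [expPayoff, mixExp, mul_sum, ← sum_add_distrib]
  exact sum_congr rfl fun _ _ => sum_congr rfl fun _ _ => sum_congr rfl fun _ _ => by ring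

end Payoff

section Obedience

variable {Ω A Θ : Type*} [Fintype Ω] [Fintype A] [DecidableEq A] [Fintype Θ]
  {φ : ℝ → ℝ} {p : Ω → ℝ} {u : A → Ω → ℝ} {σ : Θ → Ω → A → ℝ} {μ : Θ → ℝ}

noncomputable def marginalGain (φ : ℝ → ℝ) (p : Ω → ℝ) (u : A → Ω → ℝ) (σ : Θ → Ω → A → ℝ)
    (μ : Θ → ℝ) (τ : A → A → ℝ) : ℝ :=
  ∑ θ, μ θ * (deriv φ (expPayoff p u (σ θ) tauStar) *
    (expPayoff p u (σ θ) τ - expPayoff p u (σ θ) tauStar))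

theorem hasDerivAt_marginalGain (hd : Differentiable ℝ φ) (τ : A → A → ℝ) :
    HasDerivAt (fun s => ∑ θ, μ θ * φ (expPayoff p u (σ θ) (mixExp s τ tauStar)))
      (marginalGain φ p u σ μ τ) 0 := by
  simp only [expPayoff_mixExp_right]
  refine HasDerivAt.fun_sum fun θ _ => ?_
  have hline : HasDerivAt (fun s => s * expPayoff p u (σ θ) τ + (1 - s) * expPayoff p u (σ θ) tauStar)
      (expPayoff p u (σ θ) τ - expPayoff p u (σ θ) tauStar) 0 := by
    exact (((hasDerivAt_id' 0).mul_const _).fun_add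
      (((hasDerivAt_id' 0).const_sub 1).mul_const _)).congr_deriv (by ring)
  simpa using ((hd _).hasDerivAt.comp_of_eq 0 hline (by simp)).const_mul (μ θ)

theorem ambObedient_iff_marginalGain_nonpos (hc : ConcaveOn ℝ Set.univ φ)
    (hd : Differentiable ℝ φ) (hμ : ∀ θ, 0 ≤ μ θ) :
    AmbObedient φ p u σ μ ↔ ∀ τ, IsKernel τ → marginalGain φ p u σ μ τ ≤ 0 := by
  refine ⟨fun h τ hτ => (hasDerivAt_marginalGain hd τ).nonpos_of_isMaxOn_Icc ?_,
    fun h τ hτ => ?_⟩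
  · exact isMaxOn_iff.2 fun s hs => by
      simpa using h _ (isKernel_mixExp hτ isKernel_tauStar hs)
  · calc ∑ θ, μ θ * φ (expPayoff p u (σ θ) τ)
        ≤ ∑ θ, μ θ * (φ (expPayoff p u (σ θ) tauStar) + deriv φ (expPayoff p u (σ θ) tauStar) *
            (expPayoff p u (σ θ) τ - expPayoff p u (σ θ) tauStar)) :=
          sum_le_sum fun θ _ =>
            mul_le_mul_of_nonneg_left (hc.le_add_deriv_mul_sub (hd _) _) (hμ θ)
      _ = ∑ θ, μ θ * φ (expPayoff p u (σ θ) tauStar) + marginalGain φ p u σ μ τ := by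
          simp only [marginalGain, mul_add, sum_add_distrib]
      _ ≤ ∑ θ, μ θ * φ (expPayoff p u (σ θ) tauStar) := add_le_of_nonpos_right (h τ hτ)

theorem AmbObedient.div_const (h : AmbObedient φ p u σ μ) {c : ℝ} (hc : 0 < c) :
    AmbObedient φ p u σ fun θ => μ θ / c := fun τ hτ => by
  simp only [div_mul_eq_mul_div, ← sum_div]
  exact div_le_div_of_nonneg_right (h τ hτ) hc.le

theorem AmbObedient.comp_equiv {ι : Type*} [Fintype ι] (h : AmbObedient φ p u σ μ)
    (e : ι ≃ Θ) : AmbObedient φ p u (σ ∘ e) (μ ∘ e) := fun τ hτ => by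
  simpa only [Function.comp_apply, e.sum_comp (fun θ => μ θ * φ (expPayoff p u (σ θ) τ)),
    e.sum_comp (fun θ => μ θ * φ (expPayoff p u (σ θ) tauStar))] using h τ hτ

end Obedience

theorem IsProb.comp_equiv {ι Θ : Type*} [Fintype ι] [Fintype Θ] {μ : Θ → ℝ} (hμ : IsProb μ)
    (e : ι ≃ Θ) : IsProb (μ ∘ e) :=
  ⟨fun i => hμ.1 (e i), (e.sum_comp μ).trans hμ.2⟩

theorem isProb_div_sum {ι : Type*} [Fintype ι] {w : ι → ℝ} (hw : ∀ i, 0 ≤ w i)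
    (hpos : 0 < ∑ i, w i) : IsProb fun i => w i / ∑ j, w j :=
  ⟨fun i => div_nonneg (hw i) hpos.le, by rw [← sum_div, div_self hpos.ne']⟩

theorem lt_sum_div_sum_mul {ι : Type*} [Fintype ι] {w f : ι → ℝ} {c : ℝ} (hpos : 0 < ∑ i, w i)
    (h : 0 < ∑ i, w i * (f i - c)) : c < ∑ i, w i / (∑ j, w j) * f i := by
  simp only [div_mul_eq_mul_div, ← sum_div]
  rw [lt_div_iff₀ hpos]
  simp only [mul_sub, sum_sub_distrib, ← sum_mul] at h
  linarith

theorem sum_mem_senderValues {Ω A ι : Type*} [Fintype Ω] [Fintype A] [DecidableEq A] [Fintype ι]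
    {φs φr : ℝ → ℝ} {p : Ω → ℝ} {us ur : A → Ω → ℝ} {σ : ι → Ω → A → ℝ} {μ : ι → ℝ}
    (hσ : ∀ i, IsKernel (σ i)) (hμ : IsProb μ) (hobed : AmbObedient φr p ur σ μ) :
    ∑ i, μ i * φs (expPayoff p us (σ i) tauStar) ∈ senderValues φs φr p us ur := by
  let e := (Fintype.equivFin ι).symm
  exact ⟨_, σ ∘ e, μ ∘ e, fun j => hσ (e j), hμ.comp_equiv e, hobed.comp_equiv e,
    (e.sum_comp fun i => μ i * φs (expPayoff p us (σ i) tauStar)).symm⟩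

theorem exists_merge_params {φ : ℝ → ℝ} (hm : StrictMono φ) (hc : StrictConcaveOn ℝ Set.univ φ)
    (hd : Differentiable ℝ φ) {w₁ w₂ x y : ℝ} (hw₁ : 0 < w₁) (hw₂ : 0 < w₂) (hxy : x < y) :
    ∃ t α : ℝ, t ∈ Set.Icc 0 1 ∧ 0 < α ∧
      α * deriv φ (t * x + (1 - t) * y) * t = w₁ * deriv φ x ∧
      α * deriv φ (t * x + (1 - t) * y) * (1 - t) = w₂ * deriv φ y ∧
      w₁ < α * t ∧ α * (1 - t) < w₂ := by
  have hderiv_pos : ∀ z, 0 < deriv φ z := fun z =>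
    hc.concaveOn.deriv_pos_of_strictMono hm (hd z)
  set P := deriv φ x
  set Q := deriv φ y
  have hP := hderiv_pos x
  have hQ := hderiv_pos y
  have hS : 0 < w₁ * P + w₂ * Q := by positivity
  set t := w₁ * P / (w₁ * P + w₂ * Q) with ht_def
  have ht₀ : 0 < t := by positivity
  have ht₁ : t < 1 := (div_lt_one hS).2 (by nlinarith)
  have hxm : x < t * x + (1 - t) * y := by nlinarith
  have hmy : t * x + (1 - t) * y < y := by nlinarith
  set R := deriv φ (t * x + (1 - t) * y)
  have hR := hderiv_pos (t * x + (1 - t) * y)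
  have hRP : R < P := hc.strictAntiOn_deriv (fun z _ => hd z) trivial trivial hxm
  have hQR : Q < R := hc.strictAntiOn_deriv (fun z _ => hd z) trivial trivial hmy
  have hαt : (w₁ * P + w₂ * Q) / R * t = w₁ * P / R := by
    rw [ht_def]
    field_simp
  have hα1t : (w₁ * P + w₂ * Q) / R * (1 - t) = w₂ * Q / R := by
    rw [ht_def]
    field_simp
    ring
  refine ⟨t, (w₁ * P + w₂ * Q) / R, ⟨ht₀.le, ht₁.le⟩, by positivity, ?_, ?_, ?_, ?_⟩
  · rw [mul_right_comm, hαt, div_mul_cancel₀ _ hR.ne']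
  · rw [mul_right_comm, hα1t, div_mul_cancel₀ _ hR.ne']
  · rw [hαt, lt_div_iff₀ hR]
    nlinarith
  · rw [hα1t, div_lt_iff₀ hR]
    nlinarith

theorem ConcaveOn.merge_gain_pos {φ : ℝ → ℝ} (hc : ConcaveOn ℝ Set.univ φ) (hm : StrictMono φ)
    {a b U t α w₁ w₂ : ℝ} (ht : t ∈ Set.Icc 0 1) (hα : 0 ≤ α) (hbU : b ≤ U) (hUa : U ≤ a)
    (hstrict : U < a ∨ b < U) (h₁ : w₁ < α * t) (h₂ : α * (1 - t) < w₂) :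
    0 < α * (φ (t * a + (1 - t) * b) - φ U) - w₁ * (φ a - φ U) - w₂ * (φ b - φ U) := by
  have hmix : t * φ a + (1 - t) * φ b ≤ φ (t * a + (1 - t) * b) := by
    simpa using hc.2 (Set.mem_univ a) (Set.mem_univ b) ht.1 (sub_nonneg.2 ht.2) (by ring)
  have ha := sub_nonneg.2 (hm.monotone hUa)
  have hb := sub_nonpos.2 (hm.monotone hbU)
  rcases hstrict with h | h
  · nlinarith [sub_pos.2 (hm h), mul_nonneg (sub_nonneg.2 h₂.le) (neg_nonneg.2 hb)]
  · nlinarith [sub_neg.2 (hm h), mul_nonneg (sub_nonneg.2 h₁.le) ha]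

section Merge

variable {Ω A Θ : Type*}

noncomputable def mergeFamily (σ : Θ → Ω → A → ℝ) (θ θ' : Θ) (t : ℝ) : Option Θ → Ω → A → ℝ :=
  fun o => o.elim (mixExp t (σ θ) (σ θ')) σ

def mergeWeights [DecidableEq Θ] (μ : Θ → ℝ) (θ θ' : Θ) (α : ℝ) : Option Θ → ℝ :=
  fun o => o.elim α fun j => if j = θ ∨ j = θ' then 0 else μ j

theorem isKernel_mergeFamily [Fintype A] {σ : Θ → Ω → A → ℝ} (hσ : ∀ θ, IsKernel (σ θ))
    (θ θ' : Θ) {t : ℝ} (ht : t ∈ Set.Icc 0 1) : ∀ o, IsKernel (mergeFamily σ θ θ' t o)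
  | none => isKernel_mixExp (hσ θ) (hσ θ') ht
  | some j => hσ j

variable [DecidableEq Θ] {μ : Θ → ℝ} {θ θ' : Θ} {α : ℝ}

theorem mergeWeights_nonneg (hμ : ∀ θ, 0 ≤ μ θ) (hα : 0 ≤ α) :
    ∀ o, 0 ≤ mergeWeights μ θ θ' α o
  | none => hα
  | some j => by
    dsimp only [mergeWeights, Option.elim]
    split_ifs
    exacts [le_rfl, hμ j]

theorem sum_mergeWeights_mul [Fintype Θ] (hne : θ ≠ θ') (g : Option Θ → ℝ) :
    ∑ o, mergeWeights μ θ θ' α o * g o =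
      α * g none + ∑ j, μ j * g (some j) - μ θ * g (some θ) - μ θ' * g (some θ') := by
  have hsplit : ∀ j, μ j * g (some j) = (if j = θ ∨ j = θ' then 0 else μ j) * g (some j) +
      (if j = θ then μ θ * g (some θ) else 0) + (if j = θ' then μ θ' * g (some θ') else 0) := by
    intro j
    by_cases h : j = θ
    · subst h
      simp [hne]
    · by_cases h' : j = θ'
      · subst h'
        simp [h]
      · simp [h, h']
  rw [Fintype.sum_option, sum_congr rfl fun j _ => hsplit j, sum_add_distrib, sum_add_distrib,
    sum_ite_eq', sum_ite_eq']
  simp only [mergeWeights, Option.elim_none, Option.elim_some, ite_mul, zero_mul, mem_univ,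
    ↓reduceIte]
  ring

variable [Fintype Ω] [Fintype A] [DecidableEq A] [Fintype Θ] {φ : ℝ → ℝ} {p : Ω → ℝ}
  {u : A → Ω → ℝ} {σ : Θ → Ω → A → ℝ} {t : ℝ}

theorem marginalGain_merge (hne : θ ≠ θ')
    (htilt₁ : α * deriv φ (t * expPayoff p u (σ θ) tauStar +
      (1 - t) * expPayoff p u (σ θ') tauStar) * t = μ θ * deriv φ (expPayoff p u (σ θ) tauStar))
    (htilt₂ : α * deriv φ (t * expPayoff p u (σ θ) tauStar +
      (1 - t) * expPayoff p u (σ θ') tauStar) * (1 - t) =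
        μ θ' * deriv φ (expPayoff p u (σ θ') tauStar))
    (τ : A → A → ℝ) :
    marginalGain φ p u (mergeFamily σ θ θ' t) (mergeWeights μ θ θ' α) τ =
      marginalGain φ p u σ μ τ := by
  rw [marginalGain, sum_mergeWeights_mul hne]
  simp only [mergeFamily, Option.elim, expPayoff_mixExp_left, marginalGain]
  linear_combination (expPayoff p u (σ θ) τ - expPayoff p u (σ θ) tauStar) * htilt₁ +
    (expPayoff p u (σ θ') τ - expPayoff p u (σ θ') tauStar) * htilt₂

theorem AmbObedient.merge (hobed : AmbObedient φ p u σ μ) (hc : ConcaveOn ℝ Set.univ φ)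
    (hd : Differentiable ℝ φ) (hμ : ∀ θ, 0 ≤ μ θ) (hα : 0 ≤ α) (hne : θ ≠ θ')
    (htilt₁ : α * deriv φ (t * expPayoff p u (σ θ) tauStar +
      (1 - t) * expPayoff p u (σ θ') tauStar) * t = μ θ * deriv φ (expPayoff p u (σ θ) tauStar))
    (htilt₂ : α * deriv φ (t * expPayoff p u (σ θ) tauStar +
      (1 - t) * expPayoff p u (σ θ') tauStar) * (1 - t) =
        μ θ' * deriv φ (expPayoff p u (σ θ') tauStar)) :
    AmbObedient φ p u (mergeFamily σ θ θ' t) (mergeWeights μ θ θ' α) :=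
  (ambObedient_iff_marginalGain_nonpos hc hd (mergeWeights_nonneg hμ hα)).2 fun τ hτ =>
    (marginalGain_merge hne htilt₁ htilt₂ τ).trans_le
      ((ambObedient_iff_marginalGain_nonpos hc hd hμ).1 hobed τ hτ)

theorem sum_mergeWeights_mul_sub (hne : θ ≠ θ') (hμ : ∑ j, μ j = 1) {U : ℝ}
    (hU : φ U = ∑ j, μ j * φ (expPayoff p u (σ j) tauStar)) :
    ∑ o, mergeWeights μ θ θ' α o * (φ (expPayoff p u (mergeFamily σ θ θ' t o) tauStar) - φ U) =
      α * (φ (t * expPayoff p u (σ θ) tauStar + (1 - t) * expPayoff p u (σ θ') tauStar) - φ U) -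
        μ θ * (φ (expPayoff p u (σ θ) tauStar) - φ U) -
        μ θ' * (φ (expPayoff p u (σ θ') tauStar) - φ U) := by
  have hbalance : ∑ j, μ j * (φ (expPayoff p u (σ j) tauStar) - φ U) = 0 := by
    simp only [mul_sub, sum_sub_distrib, ← sum_mul, hμ, ← hU]
    ring
  rw [sum_mergeWeights_mul hne]
  simp only [mergeFamily, Option.elim, expPayoff_mixExp_left, hbalance]
  ring

end Merge

theorem weak_pareto_ranking_at_optimum_general
    {Ω A Θ : Type*} [Fintype Ω] [Fintype A] [DecidableEq A] [Fintype Θ]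
    (p : Ω → ℝ) (us ur : A → Ω → ℝ)
    (φs φr : ℝ → ℝ) (hφs : SmoothIndex φs) (hφr : SmoothIndex φr)
    (hφrstrict : StrictConcaveOn ℝ Set.univ φr)
    (σ : Θ → Ω → A → ℝ) (hσ : ∀ θ, IsKernel (σ θ)) (μ : Θ → ℝ) (hμ : IsProb μ)
    (hobed : AmbObedient φr p ur σ μ)
    (hopt : ∀ (n : ℕ) (σ' : Fin n → Ω → A → ℝ) (μ' : Fin n → ℝ),
      (∀ j, IsKernel (σ' j)) → IsProb μ' → AmbObedient φr p ur σ' μ' →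
      ∑ j, μ' j * φs (expPayoff p us (σ' j) tauStar) ≤
        ∑ θ, μ θ * φs (expPayoff p us (σ θ) tauStar))
    (Us : ℝ) (hUs : φs Us = ∑ θ, μ θ * φs (expPayoff p us (σ θ) tauStar)) :
    ∀ θ θ', μ θ ≠ 0 → μ θ' ≠ 0 →
      Us ≤ expPayoff p us (σ θ) tauStar →
      expPayoff p us (σ θ') tauStar ≤ Us →
      (Us < expPayoff p us (σ θ) tauStar ∨ expPayoff p us (σ θ') tauStar < Us) →
      WeaklyParetoRanked p us ur (σ θ) (σ θ') := by
  classical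
  intro θ θ' hθ hθ' hUa hbU hstrict
  refine Or.inl ⟨hbU.trans hUa, not_lt.1 fun hxy => ?_⟩
  have hne : θ ≠ θ' := by
    rintro rfl
    rcases hstrict with h | h <;> linarith
  obtain ⟨t, α, ht, hα, htilt₁, htilt₂, h₁, h₂⟩ := exists_merge_params hφr.1 hφrstrict hφr.2.2
    ((hμ.1 θ).lt_of_ne' hθ) ((hμ.1 θ').lt_of_ne' hθ') hxy
  have hw := mergeWeights_nonneg (θ := θ) (θ' := θ') hμ.1 hα.le
  have hpos : 0 < ∑ o, mergeWeights μ θ θ' α o :=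
    hα.trans_le (single_le_sum (fun o _ => hw o) (mem_univ none))
  have hgain : 0 < ∑ o, mergeWeights μ θ θ' α o *
      (φs (expPayoff p us (mergeFamily σ θ θ' t o) tauStar) - φs Us) := by
    rw [sum_mergeWeights_mul_sub hne hμ.2 hUs]
    exact hφs.2.1.merge_gain_pos hφs.1 ht hα.le hbU hUa hstrict h₁ h₂
  obtain ⟨n, σ', μ', hσ', hμ', hobed', hval⟩ := sum_mem_senderValues
    (isKernel_mergeFamily hσ θ θ' ht) (isProb_div_sum hw hpos)
    ((hobed.merge hφr.2.1 hφr.2.2 hμ.1 hα.le hne htilt₁ htilt₂).div_const hpos)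
  exact (lt_sum_div_sum_mul hpos hgain).not_ge
    ((hval.trans_le (hopt n σ' μ' hσ' hμ' hobed')).trans_eq hUs.symm)

/-- Theorem 1 (i): at a solution `(σ, μ)` of the sender's problem `(P)`,
with `φr` strictly concave, any two experiments in the support of `μ` whose sender payoffs
bracket `U_s(σ, μ, τ*)` (with at least one strict inequality) are weakly Pareto-ranked.
Here `Us` denotes `U_s(σ, μ, τ*)`, i.e. `φs Us = ∑_θ μ_θ φs(u_s(σ_θ, τ*))`. -/
theorem weak_pareto_ranking_at_optimum
    {Ω A Θ : Type*} [Fintype Ω] [Fintype A] [DecidableEq A] [Fintype Θ]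
    (p : Ω → ℝ) (hp : IsProb p) (us ur : A → Ω → ℝ)
    (φs φr : ℝ → ℝ) (hφs : SmoothIndex φs) (hφr : SmoothIndex φr)
    (hφrstrict : StrictConcaveOn ℝ Set.univ φr)
    (σ : Θ → Ω → A → ℝ) (hσ : ∀ θ, IsKernel (σ θ)) (μ : Θ → ℝ) (hμ : IsProb μ)
    (hobed : AmbObedient φr p ur σ μ)
    (hopt : ∀ (n : ℕ) (σ' : Fin n → Ω → A → ℝ) (μ' : Fin n → ℝ),
      (∀ j, IsKernel (σ' j)) → IsProb μ' → AmbObedient φr p ur σ' μ' →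
      ∑ j, μ' j * φs (expPayoff p us (σ' j) tauStar) ≤
        ∑ θ, μ θ * φs (expPayoff p us (σ θ) tauStar))
    (Us : ℝ) (hUs : φs Us = ∑ θ, μ θ * φs (expPayoff p us (σ θ) tauStar)) :
    ∀ θ θ', μ θ ≠ 0 → μ θ' ≠ 0 →
      Us ≤ expPayoff p us (σ θ) tauStar →
      expPayoff p us (σ θ') tauStar ≤ Us →
      (Us < expPayoff p us (σ θ) tauStar ∨ expPayoff p us (σ θ') tauStar < Us) →
      WeaklyParetoRanked p us ur (σ θ) (σ θ') :=
  weak_pareto_ranking_at_optimum_general p us ur φs φr hφs hφr hφrstrict σ hσ μ hμ hobed hopt Us hUs
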